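/- Let d ≥ 3 be odd, T_d := T_{1,d}, and set m⁺ = 4d / (1 − d + √(9d² − 10d + 1)) and m* = 7/2. Let 𝒟 ⊂ ℝ² be the closed triangle with vertices (0,−1), (1/(m⁺+1), −1/(m⁺+1)) and (2/9, −2/9), and let ℰ ⊂ ℝ² be the closed triangle with vertices (0,1), (−1/2, 0) and (−1/3, 0). Then T_d(𝒟) ∩ {(x,y) : y ≥ 0} ⊆ ℰ. -/

import Mathlib

/-!
On `𝒟` the sum `s = x + y` lies in `[-1, 0]`, `y ≥ -1` and `x ≥ (2/9)(1 + s)`; the last two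
use `2/9 ≤ 1/(m⁺ + 1) ≤ 1`, i.e. `0 ≤ m⁺ ≤ m* = 7/2`. With `u = s^d ≥ s³` the image point is
`(X, Y) = (y - u, y - 2u)`, and `ℰ` is cut out by `Y ≥ 0`, `2X - Y + 1 ≥ 0` and `3X - Y + 1 ≤ 0`.
The middle inequality is `y ≥ -1`. If `Y ≥ 0` then `18 s³ ≤ 18 u ≤ 9 y ≤ 7 s - 2`, which forces
`s ≤ -1/2`; there `9 s³ - 14 s - 5 = (s + 1)(9 s² - 9 s - 5) ≥ 0`, which yields `2 y + 1 ≤ u`,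
the last inequality.
-/

/-- The model map `T_{a,d}(x,y) = (y − a(x+y)^d, y − 2a(x+y)^d)`. -/
noncomputable def Tmap (a : ℝ) (d : ℕ) (p : ℝ × ℝ) : ℝ × ℝ :=
  (p.2 - a * (p.1 + p.2) ^ d, p.2 - 2 * a * (p.1 + p.2) ^ d)

/-- The slope `m⁺ = 4d/(1 − d + √(9d² − 10d + 1))` of the unstable
eigendirection at the periodic point `(0,1)`. -/
noncomputable def mPlus (d : ℕ) : ℝ :=
  4 * d / (1 - d + Real.sqrt (9 * (d : ℝ) ^ 2 - 10 * d + 1))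

/-- The closed triangle `𝒟` with vertices `(0,−1)`, `(1/(m⁺+1), −1/(m⁺+1))`
and `(2/9, −2/9)`. -/
noncomputable def triD (d : ℕ) : Set (ℝ × ℝ) :=
  convexHull ℝ
    {((0 : ℝ), (-1 : ℝ)),
     (1 / (mPlus d + 1), -(1 / (mPlus d + 1))),
     ((2 / 9 : ℝ), (-2 / 9 : ℝ))}

/-- The closed triangle `ℰ` with vertices `(0,1)`, `(−1/2,0)` and `(−1/3,0)`. -/
noncomputable def triE : Set (ℝ × ℝ) :=
  convexHull ℝ {((0 : ℝ), (1 : ℝ)), ((-1 / 2 : ℝ), (0 : ℝ)), ((-1 / 3 : ℝ), (0 : ℝ))}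

section ConvexHullTriple

variable {𝕜 E : Type*} [Field 𝕜] [LinearOrder 𝕜] [IsStrictOrderedRing 𝕜] [AddCommGroup E]
  [Module 𝕜 E]

theorem mem_convexHull_triple {p q r z : E} :
    z ∈ convexHull 𝕜 {p, q, r} ↔
      ∃ a b c : 𝕜, 0 ≤ a ∧ 0 ≤ b ∧ 0 ≤ c ∧ a + b + c = 1 ∧ a • p + b • q + c • r = z := by
  constructor
  · refine fun hz => convexHull_min (t := {w : E | ∃ a b c : 𝕜, 0 ≤ a ∧ 0 ≤ b ∧ 0 ≤ c ∧
      a + b + c = 1 ∧ a • p + b • q + c • r = w}) ?_ ?_ hz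
    · rintro w (rfl | rfl | rfl)
      · exact ⟨1, 0, 0, by simp⟩
      · exact ⟨0, 1, 0, by simp⟩
      · exact ⟨0, 0, 1, by simp⟩
    · rintro _ ⟨a, b, c, ha, hb, hc, habc, rfl⟩ _ ⟨a', b', c', ha', hb', hc', habc', rfl⟩
        θ θ' hθ hθ' hθθ'
      refine ⟨θ * a + θ' * a', θ * b + θ' * b', θ * c + θ' * c', by positivity, by positivity,
        by positivity, by linear_combination θ * habc + θ' * habc' + hθθ', by module⟩
  · rintro ⟨a, b, c, ha, hb, hc, habc, rfl⟩
    have := (convex_convexHull 𝕜 {p, q, r}).sum_mem (t := Finset.univ) (w := ![a, b, c])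
      (z := ![p, q, r]) (by simp [Fin.forall_fin_succ, ha, hb, hc])
      (by simp [Fin.sum_univ_three, habc])
      (fun i _ => subset_convexHull 𝕜 _ (by fin_cases i <;> simp))
    simpa [Fin.sum_univ_three, add_assoc] using this

end ConvexHullTriple

theorem Odd.pow_le_pow_of_neg_one_le_of_nonpos {R : Type*} [Ring R] [LinearOrder R]
    [IsStrictOrderedRing R] {s : R} {n m : ℕ} (hn : Odd n) (hnm : n ≤ m) (h₁ : -1 ≤ s)
    (h₀ : s ≤ 0) : s ^ n ≤ s ^ m :=
  calc s ^ n = -|s| ^ n := by rw [← hn.neg_pow, abs_of_nonpos h₀, neg_neg]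
    _ ≤ -|s| ^ m := neg_le_neg <| pow_le_pow_of_le_one (abs_nonneg s)
        (abs_le.mpr ⟨h₁, h₀.trans zero_le_one⟩) hnm
    _ ≤ s ^ m := by rw [← abs_pow]; exact neg_abs_le _

theorem mPlus_mem_Icc {d : ℕ} (hd : 2 ≤ d) : mPlus d ∈ Set.Icc 0 (7 / 2) := by
  have hd' : (2 : ℝ) ≤ d := by exact_mod_cast hd
  have hden : 0 < 1 - d + √(9 * (d : ℝ) ^ 2 - 10 * d + 1) := by
    have : (d : ℝ) - 1 < √(9 * (d : ℝ) ^ 2 - 10 * d + 1) := Real.lt_sqrt_of_sq_lt (by nlinarith)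
    linarith
  have hnum : (15 * d - 7) / 7 ≤ √(9 * (d : ℝ) ^ 2 - 10 * d + 1) :=
    Real.le_sqrt_of_sq_le (by nlinarith)
  refine ⟨by unfold mPlus; positivity, ?_⟩
  rw [mPlus, div_le_iff₀ hden]
  linarith

theorem inv_mPlus_add_one_mem_Icc {d : ℕ} (hd : 2 ≤ d) :
    1 / (mPlus d + 1) ∈ Set.Icc (2 / 9) 1 := by
  obtain ⟨h₀, h₁⟩ := mPlus_mem_Icc hd
  constructor
  · rw [div_le_div_iff₀ (by norm_num) (by linarith)]; linarith
  · rw [div_le_one (by linarith)]; linarith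

theorem triD_subset {d : ℕ} (hd : 2 ≤ d) :
    triD d ⊆ {p | -1 ≤ p.1 + p.2 ∧ p.1 + p.2 ≤ 0 ∧ 2 / 9 * (1 + p.1 + p.2) ≤ p.1 ∧ -1 ≤ p.2} := by
  rintro _ hp
  obtain ⟨a, b, c, ha, hb, hc, habc, rfl⟩ := mem_convexHull_triple.mp hp
  obtain ⟨ht₀, ht₁⟩ := inv_mPlus_add_one_mem_Icc hd
  simp only [Prod.smul_mk, smul_eq_mul, Prod.mk_add_mk, Set.mem_ofPred_eq]
  refine ⟨by linarith, by linarith, ?_, ?_⟩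
  · linarith [mul_le_mul_of_nonneg_left ht₀ hb]
  · linarith [mul_le_mul_of_nonneg_left ht₁ hb]

theorem mem_triE {X Y : ℝ} (hY : 0 ≤ Y) (h₂ : 0 ≤ 2 * X - Y + 1) (h₃ : 3 * X - Y + 1 ≤ 0) :
    (X, Y) ∈ triE :=
  mem_convexHull_triple.mpr ⟨Y, -2 * (3 * X - Y + 1), 3 * (2 * X - Y + 1), hY, by linarith,
    by linarith, by ring, Prod.ext (by simp; ring) (by simp)⟩

theorem le_neg_half_of_eighteen_mul_pow_three_le {s : ℝ} (h₀ : s ≤ 0)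
    (h : 18 * s ^ 3 ≤ 7 * s - 2) : s ≤ -1 / 2 := by
  by_contra! hs
  nlinarith [mul_nonneg (mul_nonneg (by linarith : 0 ≤ s + 1 / 2) (neg_nonneg.mpr h₀))
    (neg_nonneg.mpr h₀)]

theorem fourteen_mul_add_five_le_nine_mul_pow_three {s : ℝ} (h₁ : -1 ≤ s) (hs : s ≤ -1 / 2) :
    14 * s + 5 ≤ 9 * s ^ 3 := by
  have hq : 0 ≤ 9 * s ^ 2 - 9 * s - 5 := by nlinarith
  nlinarith [mul_nonneg (by linarith : 0 ≤ s + 1) hq]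

theorem Tmap_mem_triE {d : ℕ} (hd : 3 ≤ d) {p : ℝ × ℝ} (h₁ : -1 ≤ p.1 + p.2)
    (h₀ : p.1 + p.2 ≤ 0) (hx : 2 / 9 * (1 + p.1 + p.2) ≤ p.1) (hy : -1 ≤ p.2)
    (hY : 0 ≤ (Tmap 1 d p).2) : Tmap 1 d p ∈ triE := by
  have hcube : (p.1 + p.2) ^ 3 ≤ (p.1 + p.2) ^ d :=
    (by decide : Odd 3).pow_le_pow_of_neg_one_le_of_nonpos hd h₁ h₀
  simp only [Tmap, one_mul] at hY ⊢
  have hs := le_neg_half_of_eighteen_mul_pow_three_le h₀ (by linarith)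
  exact mem_triE hY (by linarith)
    (by linarith [fourteen_mul_add_five_le_nine_mul_pow_three h₁ hs])

theorem stmt13_general (d : ℕ) (hd : 3 ≤ d) :
    (Tmap 1 d '' triD d) ∩ {p : ℝ × ℝ | 0 ≤ p.2} ⊆ triE := by
  rintro _ ⟨⟨p, hp, rfl⟩, hY⟩
  obtain ⟨h₁, h₀, hx, hy⟩ := triD_subset (by omega) hp
  exact Tmap_mem_triE hd h₁ h₀ hx hy hY

/-- `T_d(𝒟) ∩ {y ≥ 0} ⊆ ℰ`. -/
theorem stmt13 (d : ℕ) (hd : 3 ≤ d) (hodd : Odd d) :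
    (Tmap 1 d '' triD d) ∩ {p : ℝ × ℝ | 0 ≤ p.2} ⊆ triE :=
  stmt13_general d hd
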